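/- arXiv:2402.11445 — 2 statements merged into one kernel-verified Lean document; each statement's English description precedes it below -/
import Mathlib

section
/- Let A be Hurwitz, M symmetric, P_Ω positive semidefinite, and let Q̃ satisfy AᵀQ̃ + Q̃ A + M P_Ω M = 0. For ω > 0 define F_Ω = (1/(2π)) ∫_{-ω}^{ω} (jν I − A)^{-1} dν and Q_Ω = (1/(2π)) ∫_{-ω}^{ω} (jν I − A)^{-*} M P_Ω M (jν I − A)^{-1} dν. Then Q_Ω = F_Ω^* Q̃ + Q̃ F_Ω. -/
open Matrix MeasureTheory

/-- A real square matrix is Hurwitz if all its (complex) eigenvalues have negative real part. -/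
def IsHurwitz {n : ℕ} (A : Matrix (Fin n) (Fin n) ℝ) : Prop :=
  ∀ μ ∈ spectrum ℂ (A.map (Complex.ofReal ·)), μ.re < 0

/-- The resolvent-type matrix `jνI - A` for a real matrix `A`, viewed over `ℂ`. -/
noncomputable def resMat {n : ℕ} (A : Matrix (Fin n) (Fin n) ℝ) (ν : ℝ) :
    Matrix (Fin n) (Fin n) ℂ :=
  ((ν : ℂ) * Complex.I) • (1 : Matrix (Fin n) (Fin n) ℂ) - A.map (Complex.ofReal ·)

lemma resMat_det_ne_zero {n : ℕ} {A : Matrix (Fin n) (Fin n) ℝ} (hA : IsHurwitz A) (ν : ℝ) :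
    (resMat A ν).det ≠ 0 := by
  intro h
  have hmem : ((ν : ℂ) * Complex.I) ∈ spectrum ℂ (A.map (Complex.ofReal ·)) := by
    rw [spectrum.mem_iff]
    rw [Algebra.algebraMap_eq_smul_one]
    rw [Matrix.isUnit_iff_isUnit_det]
    simpa [resMat] using (by simp [h] : ¬ IsUnit (resMat A ν).det)
  have := hA _ hmem
  simp at this

lemma resMat_continuous {n : ℕ} (A : Matrix (Fin n) (Fin n) ℝ) :
    Continuous fun ν : ℝ => resMat A ν := by
  apply continuous_matrix
  intro i j
  simp only [resMat, Matrix.sub_apply, Matrix.smul_apply, smul_eq_mul]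
  fun_prop

lemma resMat_inv_continuous {n : ℕ} {A : Matrix (Fin n) (Fin n) ℝ} (hA : IsHurwitz A)
    (i j : Fin n) : Continuous fun ν : ℝ => (resMat A ν)⁻¹ i j := by
  have h1 : Continuous fun ν : ℝ => ((resMat A ν).det)⁻¹ :=
    ((resMat_continuous A).matrix_det).inv₀ (resMat_det_ne_zero hA)
  have h2 : Continuous fun ν : ℝ => (resMat A ν).adjugate i j :=
    ((resMat_continuous A).matrix_adjugate).matrix_elem i j
  simpa [Matrix.inv_def, Ring.inverse_eq_inv'] using h1.fun_mul h2

lemma key_identity {n : ℕ} {A M PΩ Qt : Matrix (Fin n) (Fin n) ℝ} (hA : IsHurwitz A)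
    (hQt : Aᵀ * Qt + Qt * A + M * PΩ * M = 0) (ν : ℝ) :
    ((resMat A ν)⁻¹)ᴴ * (M.map (Complex.ofReal ·)) * (PΩ.map (Complex.ofReal ·)) *
        (M.map (Complex.ofReal ·)) * (resMat A ν)⁻¹ =
      ((resMat A ν)⁻¹)ᴴ * (Qt.map (Complex.ofReal ·)) +
        (Qt.map (Complex.ofReal ·)) * (resMat A ν)⁻¹ := by
  set Ac := A.map (Complex.ofReal ·) with hAc
  set Atc := Aᵀ.map (Complex.ofReal ·) with hAtc
  set Mc := M.map (Complex.ofReal ·) with hMc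
  set Pc := PΩ.map (Complex.ofReal ·) with hPc
  set Qtc := Qt.map (Complex.ofReal ·) with hQtc
  set S := resMat A ν with hS
  set R := S⁻¹ with hR
  have hdet : IsUnit S.det := (resMat_det_ne_zero hA ν).isUnit
  have hSR : S * R = 1 := Matrix.mul_nonsing_inv S hdet
  have hRSH : Rᴴ * Sᴴ = 1 := by
    calc Rᴴ * Sᴴ = (S * R)ᴴ := (Matrix.conjTranspose_mul S R).symm
    _ = 1 := by rw [hSR]; simp
  have hmap : Atc * Qtc + Qtc * Ac + Mc * Pc * Mc = 0 := by
    ext i j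
    have h0 : (Aᵀ * Qt + Qt * A + M * PΩ * M) i j = (0 : Matrix (Fin n) (Fin n) ℝ) i j := by
      rw [hQt]
    simp only [Matrix.add_apply, Matrix.mul_apply, Matrix.zero_apply] at h0
    simp only [hAtc, hAc, hMc, hPc, hQtc, Matrix.add_apply, Matrix.mul_apply, Matrix.map_apply,
      Matrix.zero_apply]
    exact_mod_cast h0
  have h3 : Mc * Pc * Mc = -(Atc * Qtc + Qtc * Ac) := by
    rw [add_comm (Atc * Qtc + Qtc * Ac)] at hmap
    exact eq_neg_of_add_eq_zero_left hmap
  have hSH : Sᴴ = (-((ν : ℂ) * Complex.I)) • (1 : Matrix (Fin n) (Fin n) ℂ) - Atc := by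
    ext i j
    simp only [hS, resMat, Matrix.conjTranspose_apply, Matrix.sub_apply, Matrix.smul_apply,
      Matrix.map_apply, Matrix.transpose_apply, smul_eq_mul, map_sub, _root_.map_mul,
      Complex.conj_ofReal, Complex.conj_I, Matrix.one_apply, hAtc]
    by_cases h : i = j <;> simp [h, eq_comm] <;> ring
  have hmid : Qtc * S + Sᴴ * Qtc = Mc * Pc * Mc := by
    rw [hSH, hS]
    simp only [resMat]
    rw [mul_sub, sub_mul, Matrix.mul_smul, Matrix.smul_mul, mul_one, one_mul, h3, ← hAc]
    module
  have c1 : Rᴴ * Mc * Pc * Mc * R = Rᴴ * (Mc * Pc * Mc) * R := by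
    simp only [Matrix.mul_assoc]
  have c2 : Rᴴ * (Qtc * S + Sᴴ * Qtc) * R = Rᴴ * Qtc * (S * R) + Rᴴ * Sᴴ * (Qtc * R) := by
    rw [Matrix.mul_add, Matrix.add_mul]
    simp only [Matrix.mul_assoc]
  rw [c1, ← hmid, c2, hSR, hRSH]
  simp [Matrix.mul_assoc]

lemma interval_integral_conj (f : ℝ → ℂ) (a b : ℝ) :
    (∫ x in a..b, (starRingEnd ℂ) (f x)) = (starRingEnd ℂ) (∫ x in a..b, f x) := by
  unfold intervalIntegral
  simp only [map_sub]
  rw [integral_conj, integral_conj]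

theorem frequency_limited_observability_split {n : ℕ}
    (A M PΩ Qt : Matrix (Fin n) (Fin n) ℝ)
    (hA : IsHurwitz A) (hM : Mᵀ = M) (hPsd : PΩ.PosSemidef)
    (hQt : Aᵀ * Qt + Qt * A + M * PΩ * M = 0)
    (ω : ℝ) (hω : 0 < ω)
    (FΩ QΩ : Matrix (Fin n) (Fin n) ℂ)
    (hFΩ : ∀ i j, FΩ i j = (2 * Real.pi : ℂ)⁻¹ * ∫ ν in (-ω)..ω, (resMat A ν)⁻¹ i j)
    (hQΩ : ∀ i j, QΩ i j = (2 * Real.pi : ℂ)⁻¹ *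
      ∫ ν in (-ω)..ω,
        (((resMat A ν)⁻¹)ᴴ * (M.map (Complex.ofReal ·)) * (PΩ.map (Complex.ofReal ·)) *
          (M.map (Complex.ofReal ·)) * (resMat A ν)⁻¹) i j) :
    QΩ = FΩᴴ * (Qt.map (Complex.ofReal ·)) + (Qt.map (Complex.ofReal ·)) * FΩ := by
  have hcont : ∀ k l : Fin n, Continuous fun ν : ℝ => (resMat A ν)⁻¹ k l :=
    fun k l => resMat_inv_continuous hA k l
  ext i j
  rw [hQΩ i j]
  have hker : (fun ν : ℝ => (((resMat A ν)⁻¹)ᴴ * (M.map (Complex.ofReal ·)) *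
        (PΩ.map (Complex.ofReal ·)) * (M.map (Complex.ofReal ·)) * (resMat A ν)⁻¹) i j)
      = fun ν : ℝ =>
        (∑ k, (starRingEnd ℂ) ((resMat A ν)⁻¹ k i) * (Qt.map (Complex.ofReal ·)) k j)
          + ∑ k, (Qt.map (Complex.ofReal ·)) i k * (resMat A ν)⁻¹ k j := by
    funext ν
    rw [key_identity hA hQt ν]
    simp [Matrix.add_apply, Matrix.mul_apply, Matrix.conjTranspose_apply]
  rw [hker]
  have hc1 : ∀ k : Fin n, Continuous fun ν : ℝ =>
      (starRingEnd ℂ) ((resMat A ν)⁻¹ k i) * (Qt.map (Complex.ofReal ·)) k j :=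
    fun k => ((Complex.continuous_conj.comp (hcont k i)).mul continuous_const)
  have hc2 : ∀ k : Fin n, Continuous fun ν : ℝ =>
      (Qt.map (Complex.ofReal ·)) i k * (resMat A ν)⁻¹ k j :=
    fun k => (continuous_const.mul (hcont k j))
  have hS1 : IntervalIntegrable (fun ν : ℝ =>
      ∑ k, (starRingEnd ℂ) ((resMat A ν)⁻¹ k i) * (Qt.map (Complex.ofReal ·)) k j)
      volume (-ω) ω :=
    (continuous_finset_sum _ fun k _ => hc1 k).intervalIntegrable _ _
  have hS2 : IntervalIntegrable (fun ν : ℝ =>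
      ∑ k, (Qt.map (Complex.ofReal ·)) i k * (resMat A ν)⁻¹ k j) volume (-ω) ω :=
    (continuous_finset_sum _ fun k _ => hc2 k).intervalIntegrable _ _
  rw [intervalIntegral.integral_add hS1 hS2,
    intervalIntegral.integral_finset_sum (fun k _ => (hc1 k).intervalIntegrable _ _),
    intervalIntegral.integral_finset_sum (fun k _ => (hc2 k).intervalIntegrable _ _)]
  have e1 : ∀ k : Fin n,
      (∫ ν in (-ω)..ω, (starRingEnd ℂ) ((resMat A ν)⁻¹ k i) * (Qt.map (Complex.ofReal ·)) k j)
        = (starRingEnd ℂ) (∫ ν in (-ω)..ω, (resMat A ν)⁻¹ k i) *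
          (Qt.map (Complex.ofReal ·)) k j := by
    intro k
    rw [intervalIntegral.integral_mul_const, interval_integral_conj]
  have e2 : ∀ k : Fin n,
      (∫ ν in (-ω)..ω, (Qt.map (Complex.ofReal ·)) i k * (resMat A ν)⁻¹ k j)
        = (Qt.map (Complex.ofReal ·)) i k * ∫ ν in (-ω)..ω, (resMat A ν)⁻¹ k j := by
    intro k
    rw [intervalIntegral.integral_const_mul]
  simp only [Finset.sum_congr rfl fun k _ => e1 k, Finset.sum_congr rfl fun k _ => e2 k]
  have hcst : (starRingEnd ℂ) ((2 * Real.pi : ℂ)⁻¹) = (2 * Real.pi : ℂ)⁻¹ := by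
    simp [map_inv₀, _root_.map_mul, Complex.conj_ofReal, map_ofNat]
  simp only [Matrix.add_apply, Matrix.mul_apply, Matrix.conjTranspose_apply, hFΩ]
  rw [mul_add, Finset.mul_sum, Finset.mul_sum]
  congr 1
  · exact Finset.sum_congr rfl fun k _ => by rw [Complex.star_def, _root_.map_mul, hcst]; ring
  · exact Finset.sum_congr rfl fun k _ => by ring
end

section
/- Let A be Hurwitz, C ∈ ℝ^{p×n}, B ∈ ℝ^{n×m}, M_1,…,M_p ∈ ℝ^{n×n} symmetric, and P_τ = ∫_{τ_i}^{τ_f} e^{At} B Bᵀ e^{Aᵀt} dt for 0 ≤ τ_i < τ_f. Then Q_τ = ∫_{τ_i}^{τ_f} e^{Aᵀt} CᵀC e^{At} dt + Σ_{i=1}^{p} ∫_{τ_i}^{τ_f} e^{Aᵀt} M_i P_τ M_i e^{At} dt satisfies AᵀQ_τ + Q_τ A + e^{Aᵀτ_i}CᵀC e^{Aτ_i} − e^{Aᵀτ_f}CᵀC e^{Aτ_f} + Σ_{i=1}^{p} ( e^{Aᵀτ_i} M_i P_τ M_i e^{Aτ_i} − e^{Aᵀτ_f} M_i P_τ M_i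 e^{Aτ_f} ) = 0. -/
open Matrix MeasureTheory

section Aux

attribute [local instance] Matrix.linftyOpNormedRing Matrix.linftyOpNormedAlgebra

variable {n : ℕ}

open NormedSpace intervalIntegral in
private lemma aux_continuous (A : Matrix (Fin n) (Fin n) ℝ) :
    Continuous (fun t : ℝ => exp (t • A)) :=
  continuous_iff_continuousAt.2 fun t =>
    (hasDerivAt_exp_smul_const A t).continuousAt

open NormedSpace intervalIntegral in
private lemma key (A X : Matrix (Fin n) (Fin n) ℝ) (τi τf : ℝ) :
    Aᵀ * (∫ t in τi..τf, exp (t • Aᵀ) * X * exp (t • A)) +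
      (∫ t in τi..τf, exp (t • Aᵀ) * X * exp (t • A)) * A =
      exp (τf • Aᵀ) * X * exp (τf • A) - exp (τi • Aᵀ) * X * exp (τi • A) := by
  letI : ENormedAddMonoid (Matrix (Fin n) (Fin n) ℝ) := NormedAddGroup.toENormedAddMonoid
  set F : ℝ → Matrix (Fin n) (Fin n) ℝ := fun t => exp (t • Aᵀ) * X * exp (t • A) with hF
  have hcontF : Continuous F :=
    ((aux_continuous Aᵀ).mul continuous_const).mul (aux_continuous A)
  have hderiv : ∀ t : ℝ, HasDerivAt F (Aᵀ * F t + F t * A) t := by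
    intro t
    have h1 : HasDerivAt (fun u : ℝ => exp (u • Aᵀ)) (Aᵀ * exp (t • Aᵀ)) t :=
      hasDerivAt_exp_smul_const' Aᵀ t
    have h2 : HasDerivAt (fun u : ℝ => exp (u • A)) (exp (t • A) * A) t :=
      hasDerivAt_exp_smul_const A t
    have := (h1.mul_const X).mul h2
    refine this.congr_deriv ?_
    simp only [hF]
    noncomm_ring
  have hint : IntervalIntegrable (fun t => Aᵀ * F t + F t * A) volume τi τf :=
    ((continuous_const.mul hcontF).add (hcontF.mul continuous_const)).intervalIntegrable τi τf
  have hFint : IntervalIntegrable F volume τi τf := hcontF.intervalIntegrable τi τf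
  have hftc : (∫ t in τi..τf, (Aᵀ * F t + F t * A)) = F τf - F τi :=
    integral_eq_sub_of_hasDerivAt (fun t _ => hderiv t) hint
  rw [← hftc, integral_add (f := fun t => Aᵀ * F t) (g := fun t => F t * A) ((continuous_const.mul hcontF).intervalIntegrable τi τf)
      ((hcontF.mul continuous_const).intervalIntegrable τi τf)]
  congr 1
  · exact
      (_root_.ContinuousLinearMap.intervalIntegral_comp_comm
        (ContinuousLinearMap.mul ℝ (Matrix (Fin n) (Fin n) ℝ) Aᵀ) hFint).symm
  · exact
      (_root_.ContinuousLinearMap.intervalIntegral_comp_comm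
        ((ContinuousLinearMap.mul ℝ (Matrix (Fin n) (Fin n) ℝ)).flip A) hFint).symm

open NormedSpace in
private lemma entry_integral (f : ℝ → Matrix (Fin n) (Fin n) ℝ) (hf : Continuous f)
    (a b : ℝ) (i j : Fin n) :
    (∫ t in a..b, (f t) i j) = (∫ t in a..b, f t) i j := by
  let L : Matrix (Fin n) (Fin n) ℝ →L[ℝ] ℝ :=
    LinearMap.toContinuousLinearMap
      { toFun := fun M => M i j
        map_add' := fun _ _ => rfl
        map_smul' := fun _ _ => rfl }
  exact _root_.ContinuousLinearMap.intervalIntegral_comp_comm L (hf.intervalIntegrable a b)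

theorem multi_output_time_limited_observability_lyapunov {n m p : ℕ}
    (A : Matrix (Fin n) (Fin n) ℝ) (B : Matrix (Fin n) (Fin m) ℝ)
    (C : Matrix (Fin p) (Fin n) ℝ) (M : Fin p → Matrix (Fin n) (Fin n) ℝ)
    (hA : IsHurwitz A) (hM : ∀ k, (M k)ᵀ = M k)
    (τi τf : ℝ) (hτi : 0 ≤ τi) (hττ : τi < τf)
    (Pτ Qτ : Matrix (Fin n) (Fin n) ℝ)
    (hPτ : ∀ i j, Pτ i j =
      ∫ t in τi..τf,
        (NormedSpace.exp (t • A) * B * Bᵀ * NormedSpace.exp (t • Aᵀ)) i j)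
    (hQτ : ∀ i j, Qτ i j =
      (∫ t in τi..τf,
        (NormedSpace.exp (t • Aᵀ) * Cᵀ * C * NormedSpace.exp (t • A)) i j)
      + ∑ k : Fin p, ∫ t in τi..τf,
          (NormedSpace.exp (t • Aᵀ) * M k * Pτ * M k * NormedSpace.exp (t • A)) i j) :
    Aᵀ * Qτ + Qτ * A
      + NormedSpace.exp (τi • Aᵀ) * (Cᵀ * C) * NormedSpace.exp (τi • A)
      - NormedSpace.exp (τf • Aᵀ) * (Cᵀ * C) * NormedSpace.exp (τf • A)
      + ∑ k : Fin p,
          (NormedSpace.exp (τi • Aᵀ) * (M k * Pτ * M k) * NormedSpace.exp (τi • A)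
            - NormedSpace.exp (τf • Aᵀ) * (M k * Pτ * M k) * NormedSpace.exp (τf • A)) = 0 := by
  classical
  have hcontF : ∀ X : Matrix (Fin n) (Fin n) ℝ,
      Continuous (fun t : ℝ => NormedSpace.exp (t • Aᵀ) * X * NormedSpace.exp (t • A)) :=
    fun X => ((aux_continuous Aᵀ).mul continuous_const).mul (aux_continuous A)
  set IC : Matrix (Fin n) (Fin n) ℝ :=
    ∫ t in τi..τf, NormedSpace.exp (t • Aᵀ) * (Cᵀ * C) * NormedSpace.exp (t • A) with hIC
  set IM : Fin p → Matrix (Fin n) (Fin n) ℝ := fun k =>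
    ∫ t in τi..τf, NormedSpace.exp (t • Aᵀ) * (M k * Pτ * M k) * NormedSpace.exp (t • A)
    with hIM
  have hQ : Qτ = IC + ∑ k : Fin p, IM k := by
    ext i j
    rw [hQτ i j, Matrix.add_apply, Matrix.sum_apply]
    congr 1
    · calc (∫ t in τi..τf,
            (NormedSpace.exp (t • Aᵀ) * Cᵀ * C * NormedSpace.exp (t • A)) i j)
          = ∫ t in τi..τf,
            (NormedSpace.exp (t • Aᵀ) * (Cᵀ * C) * NormedSpace.exp (t • A)) i j := by
            simp_rw [Matrix.mul_assoc]
        _ = IC i j := entry_integral _ (hcontF (Cᵀ * C)) τi τf i j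
    · refine Finset.sum_congr rfl fun k _ => ?_
      calc (∫ t in τi..τf,
            (NormedSpace.exp (t • Aᵀ) * M k * Pτ * M k * NormedSpace.exp (t • A)) i j)
          = ∫ t in τi..τf,
            (NormedSpace.exp (t • Aᵀ) * (M k * Pτ * M k) * NormedSpace.exp (t • A)) i j := by
            simp_rw [Matrix.mul_assoc]
        _ = IM k i j := entry_integral _ (hcontF (M k * Pτ * M k)) τi τf i j
  have h1 := key A (Cᵀ * C) τi τf
  have hk := fun k => key A (M k * Pτ * M k) τi τf
  rw [hQ]
  have expand : Aᵀ * (IC + ∑ k : Fin p, IM k) + (IC + ∑ k : Fin p, IM k) * A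
      = (Aᵀ * IC + IC * A) + ∑ k : Fin p, (Aᵀ * IM k + IM k * A) := by
    rw [mul_add, add_mul, Finset.mul_sum, Finset.sum_mul, Finset.sum_add_distrib]
    abel
  rw [expand, h1, Finset.sum_congr rfl fun k _ => hk k]
  rw [show (∑ k : Fin p,
      (NormedSpace.exp (τf • Aᵀ) * (M k * Pτ * M k) * NormedSpace.exp (τf • A)
        - NormedSpace.exp (τi • Aᵀ) * (M k * Pτ * M k) * NormedSpace.exp (τi • A)))
      = - ∑ k : Fin p,
      (NormedSpace.exp (τi • Aᵀ) * (M k * Pτ * M k) * NormedSpace.exp (τi • A)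
        - NormedSpace.exp (τf • Aᵀ) * (M k * Pτ * M k) * NormedSpace.exp (τf • A)) from by
    rw [← Finset.sum_neg_distrib]
    exact Finset.sum_congr rfl fun k _ => (neg_sub _ _).symm]
  abel

end Aux
end
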